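/- Let a_1, …, a_m be complex numbers and let μ_1, …, μ_m be pairwise distinct complex numbers with |μ_i| ≤ 1 for every i, and define f(n) = Σ_{i=1}^m a_i μ_i^n for integers n ≥ 1. If f(n) is an integer for every integer n ≥ 1, then for every index i with a_i ≠ 0 and μ_i ≠ 0, the number μ_i is a root of unity (μ_i^d = 1 for some positive integer d). -/

import Mathlib

/-!
The values `f (n + 1)` are integers of absolute value at most `∑ ‖a i‖`, so they range over a
finite set, and by pigeonhole two windows `f (n₁ + 1 + j)`, `f (n₂ + 1 + j)`, `j < m`, with
`n₁ < n₂` coincide. Since the `μ i` are distinct, the Vandermonde matrix of the window is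
invertible, so the coincidence forces `a i * μ i ^ (n₁ + 1) = a i * μ i ^ (n₂ + 1)` for every `i`,
whence `μ i ^ (n₂ - n₁) = 1` whenever `a i ≠ 0` and `μ i ≠ 0`.
-/

open Finset

theorem exists_lt_forall_shift_eq_of_finite {α : Type*} {s : Set α} (hs : s.Finite)
    (g : ℕ → α) (hg : ∀ n, g n ∈ s) (m : ℕ) :
    ∃ n₁ n₂, n₁ < n₂ ∧ ∀ j : Fin m, g (n₁ + j) = g (n₂ + j) := by
  obtain ⟨n₁, n₂, hlt, heq⟩ := Set.Finite.exists_lt_map_eq_of_forall_mem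
    (f := fun n (j : Fin m) => g (n + j)) (t := {w | ∀ j, w j ∈ s})
    (fun n j => hg _) (Set.Finite.pi' fun _ => hs)
  exact ⟨n₁, n₂, hlt, congrFun heq⟩

theorem Complex.finite_setOf_intCast_norm_le (B : ℝ) :
    {z : ℂ | (∃ k : ℤ, z = k) ∧ ‖z‖ ≤ B}.Finite := by
  refine ((Set.finite_Icc (-⌈B⌉) ⌈B⌉).image ((↑) : ℤ → ℂ)).subset ?_
  rintro _ ⟨⟨k, rfl⟩, hk⟩
  rw [Complex.norm_intCast, abs_le] at hk
  refine ⟨k, ⟨?_, ?_⟩, rfl⟩ <;>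
  · rw [← Int.cast_le (R := ℝ)]
    push_cast
    linarith [Int.le_ceil B]

theorem norm_sum_mul_pow_le {ι 𝕜 : Type*} [Fintype ι] [NormedDivisionRing 𝕜] (a μ : ι → 𝕜)
    (hμ : ∀ i, ‖μ i‖ ≤ 1) (n : ℕ) :
    ‖∑ i, a i * μ i ^ n‖ ≤ ∑ i, ‖a i‖ := by
  refine (norm_sum_le _ _).trans (sum_le_sum fun i _ => ?_)
  rw [norm_mul, norm_pow]
  exact mul_le_of_le_one_right (norm_nonneg _) (pow_le_one₀ (norm_nonneg _) (hμ i))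

theorem mul_pow_eq_of_forall_sum_mul_pow_eq {R : Type*} [CommRing R] [IsDomain R] {m : ℕ}
    {a μ : Fin m → R} (hμ : Function.Injective μ) {N N' : ℕ}
    (h : ∀ j : Fin m, ∑ i, a i * μ i ^ (N + j) = ∑ i, a i * μ i ^ (N' + j)) (i : Fin m) :
    a i * μ i ^ N = a i * μ i ^ N' := by
  have hzero := Matrix.eq_zero_of_forall_pow_sum_mul_pow_eq_zero
    (v := fun i => a i * μ i ^ N - a i * μ i ^ N') hμ fun j => by
      simp only [sub_mul, sum_sub_distrib, mul_assoc, ← pow_add, h j, sub_self]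
  exact sub_eq_zero.mp (congrFun hzero i)

theorem pow_sub_eq_one_of_pow_eq {G₀ : Type*} [GroupWithZero G₀] {x : G₀} (hx : x ≠ 0)
    {k l : ℕ} (hkl : k ≤ l) (h : x ^ k = x ^ l) : x ^ (l - k) = 1 := by
  rw [pow_sub₀ x hx hkl, h, mul_inv_cancel₀ (pow_ne_zero l hx)]

/-- Any frequency appearing with nonzero coefficient in an integer-valued
exponential sum with frequencies of absolute value at most 1 is zero
or a root of unity (used in the proof of Proposition 2.1). -/
theorem integer_valued_exponential_sum_frequencies_root_of_unity
    {m : ℕ} (a μ : Fin m → ℂ)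
    (hdist : Function.Injective μ)
    (hμ : ∀ i, ‖μ i‖ ≤ 1)
    (f : ℕ → ℂ) (hf : ∀ n, f n = ∑ i, a i * μ i ^ n)
    (hint : ∀ n : ℕ, 1 ≤ n → ∃ z : ℤ, f n = (z : ℂ)) :
    ∀ i, a i ≠ 0 → μ i ≠ 0 → ∃ d : ℕ, 0 < d ∧ μ i ^ d = 1 := by
  intro i ha hμi
  have hvalues : ∀ n, f (n + 1) ∈ {z : ℂ | (∃ k : ℤ, z = k) ∧ ‖z‖ ≤ ∑ i, ‖a i‖} := fun n =>
    ⟨hint (n + 1) n.succ_pos, hf (n + 1) ▸ norm_sum_mul_pow_le a μ hμ (n + 1)⟩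
  obtain ⟨n₁, n₂, hlt, hwindow⟩ := exists_lt_forall_shift_eq_of_finite
    (Complex.finite_setOf_intCast_norm_le _) (fun n => f (n + 1)) hvalues m
  have hterm := mul_pow_eq_of_forall_sum_mul_pow_eq hdist (N := n₁ + 1) (N' := n₂ + 1)
    (fun j => by simpa only [hf, add_right_comm _ 1] using hwindow j) i
  refine ⟨(n₂ + 1) - (n₁ + 1), by omega, pow_sub_eq_one_of_pow_eq hμi (by omega) ?_⟩
  exact mul_left_cancel₀ ha hterm
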